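/- arXiv:2109.03207 — 5 statements merged into one kernel-verified Lean document; each statement's English description precedes it below -/
import Mathlib

section
/- Let d be a positive integer, L > 0, and let x₁, x₂, g₁, g₂ ∈ ℝ^d. Suppose ‖g₁ − g₂‖² > L⟨g₁ − g₂, x₁ − x₂⟩. Set u = g₁ − g₂ − (L/2)(x₁ − x₂) (the hypothesis implies u ≠ 0). Then the unique minimizer of (θ₁, θ₂) ↦ ‖g₁ − θ₁‖² + ‖g₂ − θ₂‖² over the set {(θ₁, θ₂) ∈ ℝ^d × ℝ^d : (1/L)‖θ₁ − θ₂‖² ≤ ⟨θ₁ − θ₂, x₁ − x₂⟩} is given by θ̂₁ = (g₁ + g₂ + (L/2)(x₁ − x₂))/2 + (L‖x₁ − x₂‖/4)·(u/‖u‖) and θ̂₂ = (g₁ + g₂ − (L/2)(x₁ − x₂))/2 − (L‖x₁ − x₂‖/4)·(u/‖u‖). -/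
/-!
Write `v = θ₁ - θ₂`. The constraint says exactly that `v` lies in the closed ball of radius
`r = (L/2)‖x₁ - x₂‖` about `c = (L/2)(x₁ - x₂)`, and by the parallelogram law the objective is
`(‖(g₁ + g₂) - (θ₁ + θ₂)‖² + ‖(g₁ - g₂) - v‖²) / 2`. So the problem splits: `θ₁ + θ₂ = g₁ + g₂`
is forced, and `v` must be the metric projection of `g₁ - g₂` onto the ball. The hypothesis says
that `g₁ - g₂` lies outside the ball, so the projection is `c + r (g₁ - g₂ - c) / ‖g₁ - g₂ - c‖`,
which is the closed form.
-/

open scoped RealInnerProductSpace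

section InnerProductSpace

variable {E : Type*} [NormedAddCommGroup E] [InnerProductSpace ℝ E]

theorem norm_sq_le_two_mul_inner_iff (v c : E) : ‖v‖ ^ 2 ≤ 2 * ⟪v, c⟫ ↔ ‖v - c‖ ≤ ‖c‖ := by
  rw [← sq_le_sq₀ (norm_nonneg _) (norm_nonneg _), norm_sub_sq_real]
  constructor <;> intro h <;> linarith

theorem one_div_mul_norm_sq_le_inner_iff {L : ℝ} (hL : 0 < L) (v δ : E) :
    1 / L * ‖v‖ ^ 2 ≤ ⟪v, δ⟫ ↔ ‖v - (L / 2) • δ‖ ≤ L / 2 * ‖δ‖ := by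
  have hc : ‖(L / 2) • δ‖ = L / 2 * ‖δ‖ := by
    rw [norm_smul, Real.norm_of_nonneg (by positivity)]
  rw [← hc, ← norm_sq_le_two_mul_inner_iff, real_inner_smul_right, one_div,
    inv_mul_le_iff₀ hL]
  constructor <;> intro h <;> linarith

theorem norm_center_add_smul_sub_center {c y : E} (hy : y ≠ c) {r : ℝ} (hr : 0 ≤ r) :
    ‖c + (r / ‖y - c‖) • (y - c) - c‖ = r := by
  have hn : ‖y - c‖ ≠ 0 := norm_ne_zero_iff.2 (sub_ne_zero.2 hy)
  rw [add_sub_cancel_left, norm_smul, Real.norm_of_nonneg (by positivity), div_mul_cancel₀ _ hn]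

theorem inner_sub_proj_closedBall_nonpos {c y v : E} {r : ℝ} (hv : ‖v - c‖ ≤ r)
    (hr : r ≤ ‖y - c‖) :
    ⟪y - (c + (r / ‖y - c‖) • (y - c)), v - (c + (r / ‖y - c‖) • (y - c))⟫ ≤ 0 := by
  rcases eq_or_ne y c with rfl | hy
  · simp
  set n := ‖y - c‖
  have hn : 0 < n := norm_pos_iff.2 (sub_ne_zero.2 hy)
  have hyp : y - (c + (r / n) • (y - c)) = (1 - r / n) • (y - c) := by module
  have hvp : v - (c + (r / n) • (y - c)) = (v - c) - (r / n) • (y - c) := by abel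
  have hcs : ⟪y - c, v - c⟫ ≤ n * r :=
    (real_inner_le_norm _ _).trans (mul_le_mul_of_nonneg_left hv hn.le)
  have hscale : 0 ≤ 1 - r / n := by rw [sub_nonneg, div_le_one hn]; exact hr
  rw [hyp, hvp, real_inner_smul_left, inner_sub_right, real_inner_smul_right,
    real_inner_self_eq_norm_sq]
  have : r / n * n ^ 2 = n * r := by field_simp
  exact mul_nonpos_of_nonneg_of_nonpos hscale (by linarith)

theorem norm_sub_proj_closedBall_sq_add_le {c y v : E} {r : ℝ} (hv : ‖v - c‖ ≤ r)
    (hr : r ≤ ‖y - c‖) :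
    ‖y - (c + (r / ‖y - c‖) • (y - c))‖ ^ 2 + ‖v - (c + (r / ‖y - c‖) • (y - c))‖ ^ 2
      ≤ ‖y - v‖ ^ 2 := by
  have hvi := inner_sub_proj_closedBall_nonpos hv hr
  set p := c + (r / ‖y - c‖) • (y - c)
  have hsplit : y - v = (y - p) - (v - p) := by abel
  rw [hsplit, norm_sub_sq_real (y - p)]
  linarith

theorem norm_sub_sq_add_norm_sub_sq (a₁ a₂ b₁ b₂ : E) :
    ‖a₁ - b₁‖ ^ 2 + ‖a₂ - b₂‖ ^ 2
      = (‖(a₁ + a₂) - (b₁ + b₂)‖ ^ 2 + ‖(a₁ - a₂) - (b₁ - b₂)‖ ^ 2) / 2 := by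
  have h := parallelogram_law_with_norm ℝ (a₁ - b₁) (a₂ - b₂)
  rw [show a₁ - b₁ + (a₂ - b₂) = a₁ + a₂ - (b₁ + b₂) by abel,
    show a₁ - b₁ - (a₂ - b₂) = a₁ - a₂ - (b₁ - b₂) by abel] at h
  linarith

end InnerProductSpace

theorem norm_sub_sq_add_norm_sub_sq_pos {E : Type*} [NormedAddCommGroup E] {a₁ a₂ b₁ b₂ : E}
    (h : (a₁, a₂) ≠ (b₁, b₂)) :
    0 < ‖a₁ - b₁‖ ^ 2 + ‖a₂ - b₂‖ ^ 2 := by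
  rw [Ne, Prod.ext_iff, not_and_or] at h
  rcases h with h₁ | h₂
  · have := norm_pos_iff.2 (sub_ne_zero.2 h₁)
    positivity
  · have := norm_pos_iff.2 (sub_ne_zero.2 h₂)
    positivity

theorem coco2_active_case_general (d : ℕ) (L : ℝ) (hL : 0 < L)
    (x₁ x₂ g₁ g₂ u θh₁ θh₂ : EuclideanSpace ℝ (Fin d))
    (h : ‖g₁ - g₂‖ ^ 2 > L * ⟪g₁ - g₂, x₁ - x₂⟫)
    (hu : u = g₁ - g₂ - (L / 2) • (x₁ - x₂))
    (h1 : θh₁ = (2 : ℝ)⁻¹ • (g₁ + g₂ + (L / 2) • (x₁ - x₂))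
        + (L * ‖x₁ - x₂‖ / 4) • (‖u‖⁻¹ • u))
    (h2 : θh₂ = (2 : ℝ)⁻¹ • (g₁ + g₂ - (L / 2) • (x₁ - x₂))
        - (L * ‖x₁ - x₂‖ / 4) • (‖u‖⁻¹ • u)) :
    u ≠ 0 ∧
    ((1 / L) * ‖θh₁ - θh₂‖ ^ 2 ≤ ⟪θh₁ - θh₂, x₁ - x₂⟫) ∧
    ∀ θ₁ θ₂ : EuclideanSpace ℝ (Fin d),
      (1 / L) * ‖θ₁ - θ₂‖ ^ 2 ≤ ⟪θ₁ - θ₂, x₁ - x₂⟫ →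
      (θ₁, θ₂) ≠ (θh₁, θh₂) →
      ‖g₁ - θh₁‖ ^ 2 + ‖g₂ - θh₂‖ ^ 2 < ‖g₁ - θ₁‖ ^ 2 + ‖g₂ - θ₂‖ ^ 2 := by
  set c := (L / 2) • (x₁ - x₂)
  set r := L / 2 * ‖x₁ - x₂‖
  have hout : r < ‖u‖ := by
    rw [hu, ← not_le, ← one_div_mul_norm_sq_le_inner_iff hL, one_div, inv_mul_le_iff₀ hL]
    exact h.not_ge
  have hu0 : u ≠ 0 := norm_pos_iff.1 ((by positivity : 0 ≤ r).trans_lt hout)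
  have hsum : θh₁ + θh₂ = g₁ + g₂ := by rw [h1, h2]; module
  have hdiff : θh₁ - θh₂ = c + (r / ‖(g₁ - g₂) - c‖) • ((g₁ - g₂) - c) := by
    rw [h1, h2, ← hu]; module
  refine ⟨hu0, ?_, fun θ₁ θ₂ hθ hne ↦ ?_⟩
  · rw [one_div_mul_norm_sq_le_inner_iff hL, hdiff,
      norm_center_add_smul_sub_center (sub_ne_zero.1 (hu ▸ hu0)) (by positivity)]
  · have hproj := norm_sub_proj_closedBall_sq_add_le
      ((one_div_mul_norm_sq_le_inner_iff hL _ _).1 hθ) (hu ▸ hout.le)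
    rw [← hdiff, norm_sub_rev (θ₁ - θ₂)] at hproj
    rw [norm_sub_sq_add_norm_sub_sq g₁ g₂ θh₁ θh₂, norm_sub_sq_add_norm_sub_sq g₁ g₂ θ₁ θ₂,
      hsum, sub_self, norm_zero, zero_pow two_ne_zero, zero_add]
    have hdist := norm_sub_sq_add_norm_sub_sq θh₁ θh₂ θ₁ θ₂
    rw [hsum] at hdist
    have hpos := norm_sub_sq_add_norm_sub_sq_pos hne.symm
    linarith

/-- COCO₂, second case (Theorem 3.1): when the observed gradients violate
co-coercivity, the closed-form projection is the unique minimizer. -/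
theorem coco2_active_case (d : ℕ) (hd : 0 < d) (L : ℝ) (hL : 0 < L)
    (x₁ x₂ g₁ g₂ u θh₁ θh₂ : EuclideanSpace ℝ (Fin d))
    (h : ‖g₁ - g₂‖ ^ 2 > L * ⟪g₁ - g₂, x₁ - x₂⟫)
    (hu : u = g₁ - g₂ - (L / 2) • (x₁ - x₂))
    (h1 : θh₁ = (2 : ℝ)⁻¹ • (g₁ + g₂ + (L / 2) • (x₁ - x₂))
        + (L * ‖x₁ - x₂‖ / 4) • (‖u‖⁻¹ • u))
    (h2 : θh₂ = (2 : ℝ)⁻¹ • (g₁ + g₂ - (L / 2) • (x₁ - x₂))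
        - (L * ‖x₁ - x₂‖ / 4) • (‖u‖⁻¹ • u)) :
    u ≠ 0 ∧
    ((1 / L) * ‖θh₁ - θh₂‖ ^ 2 ≤ ⟪θh₁ - θh₂, x₁ - x₂⟫) ∧
    ∀ θ₁ θ₂ : EuclideanSpace ℝ (Fin d),
      (1 / L) * ‖θ₁ - θ₂‖ ^ 2 ≤ ⟪θ₁ - θ₂, x₁ - x₂⟫ →
      (θ₁, θ₂) ≠ (θh₁, θh₂) →
      ‖g₁ - θh₁‖ ^ 2 + ‖g₂ - θh₂‖ ^ 2 < ‖g₁ - θ₁‖ ^ 2 + ‖g₂ - θ₂‖ ^ 2 :=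
  coco2_active_case_general d L hL x₁ x₂ g₁ g₂ u θh₁ θh₂ h hu h1 h2
end

section
/- Let d, K be positive integers, L > 0, x₁, …, x_K, g₁, …, g_K ∈ ℝ^d, and let M be a symmetric positive definite d×d real matrix. Let Θ be the COCO feasible set determined by L and x₁, …, x_K. If θ̂ = (θ̂₁, …, θ̂_K) ∈ Θ minimizes the function θ ↦ Σ_{k=1}^K (g_k − θ_k)ᵀ M (g_k − θ_k) over Θ, then Σ_{k=1}^K θ̂_k = Σ_{k=1}^K g_k; that is, the estimated gradients and the raw observations have the same centroid. -/
/-!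
Translating every `θ k` by a common vector `s` keeps a tuple in the COCO feasible set, and it
replaces the residuals `a k = g k - θh k` by `a k - s`. For the positive definite quadratic form
`Q v = ⟪v, M v⟫`, shifting by the mean residual `s = (∑ a) / K` lowers `∑ Q (a k)` by
`Q (∑ a) / K`, so minimality of `θh` forces `∑ a = 0`.
-/

open scoped RealInnerProductSpace

theorem Matrix.PosDef.inner_toEuclideanLin_self_pos {n : Type*} [Fintype n] [DecidableEq n]
    {M : Matrix n n ℝ} (hM : M.PosDef) {v : EuclideanSpace ℝ n} (hv : v ≠ 0) :
    0 < ⟪v, M.toEuclideanLin v⟫ := by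
  have := hM.dotProduct_mulVec_pos (x := WithLp.ofLp v) (by simpa using hv)
  simpa [PiLp.inner_apply, Matrix.toLpLin_apply, dotProduct, mul_comm] using this

section

variable {ι E : Type*} [Fintype ι] [NormedAddCommGroup E] [InnerProductSpace ℝ E]
  {T : E →ₗ[ℝ] E}

theorem LinearMap.IsSymmetric.sum_inner_sub_apply_sub (hT : T.IsSymmetric) (a : ι → E) (s : E) :
    ∑ k, ⟪a k - s, T (a k - s)⟫
      = ∑ k, ⟪a k, T (a k)⟫ - 2 * ⟪∑ k, a k, T s⟫ + Fintype.card ι * ⟪s, T s⟫ := by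
  have hsa : ∀ k, ⟪s, T (a k)⟫ = ⟪a k, T s⟫ := fun k => by
    rw [← hT, real_inner_comm]
  simp only [map_sub, inner_sub_left, inner_sub_right, hsa, Finset.sum_sub_distrib, sum_inner,
    Finset.sum_const, Finset.card_univ, nsmul_eq_mul]
  ring

theorem LinearMap.IsSymmetric.sum_inner_sub_centroid (hT : T.IsSymmetric) (a : ι → E) :
    ∑ k, ⟪a k - (Fintype.card ι : ℝ)⁻¹ • ∑ j, a j, T (a k - (Fintype.card ι : ℝ)⁻¹ • ∑ j, a j)⟫
      = ∑ k, ⟪a k, T (a k)⟫ - (Fintype.card ι : ℝ)⁻¹ * ⟪∑ k, a k, T (∑ k, a k)⟫ := by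
  rcases isEmpty_or_nonempty ι with hι | hι
  · simp
  have hn : (Fintype.card ι : ℝ) ≠ 0 := Nat.cast_ne_zero.mpr Fintype.card_ne_zero
  rw [hT.sum_inner_sub_apply_sub, map_smul, real_inner_smul_left, real_inner_smul_right]
  field_simp
  ring

theorem LinearMap.IsSymmetric.sum_eq_zero_of_forall_le_sum_inner_sub (hT : T.IsSymmetric)
    (hpos : ∀ v, v ≠ 0 → 0 < ⟪v, T v⟫) (a : ι → E)
    (hmin : ∀ s, ∑ k, ⟪a k, T (a k)⟫ ≤ ∑ k, ⟪a k - s, T (a k - s)⟫) :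
    ∑ k, a k = 0 := by
  by_contra hu
  rcases isEmpty_or_nonempty ι with hι | hι
  · simp at hu
  have key := hmin ((Fintype.card ι : ℝ)⁻¹ • ∑ j, a j)
  rw [hT.sum_inner_sub_centroid] at key
  have : 0 < (Fintype.card ι : ℝ)⁻¹ * ⟪∑ k, a k, T (∑ k, a k)⟫ :=
    mul_pos (by simp [Fintype.card_pos]) (hpos _ hu)
  linarith

end

theorem coco_centroid_preserved_general (d K : ℕ)
    (L : ℝ)
    (x g θh : Fin K → EuclideanSpace ℝ (Fin d))
    (M : Matrix (Fin d) (Fin d) ℝ) (hMpd : M.PosDef)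
    (Θ : Set (Fin K → EuclideanSpace ℝ (Fin d)))
    (hΘ : Θ = {θ | ∀ m l : Fin K, m < l →
      (1 / L) * ‖θ m - θ l‖ ^ 2 ≤ ⟪θ m - θ l, x m - x l⟫})
    (hmem : θh ∈ Θ)
    (hmin : ∀ θ ∈ Θ,
      (∑ k, ⟪g k - θh k, Matrix.toEuclideanLin M (g k - θh k)⟫)
        ≤ ∑ k, ⟪g k - θ k, Matrix.toEuclideanLin M (g k - θ k)⟫) :
    ∑ k, θh k = ∑ k, g k := by
  rw [eq_comm, ← sub_eq_zero, ← Finset.sum_sub_distrib]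
  refine LinearMap.IsSymmetric.sum_eq_zero_of_forall_le_sum_inner_sub
    (Matrix.isSymmetric_toEuclideanLin_iff.mpr hMpd.isHermitian)
    (fun _ hv => hMpd.inner_toEuclideanLin_self_pos hv) _ fun s => ?_
  have htranslate : (fun k => θh k + s) ∈ Θ := by
    rw [hΘ] at hmem ⊢
    intro m l hml
    simpa only [add_sub_add_right_eq_sub] using hmem m l hml
  simpa only [sub_add_eq_sub_sub] using hmin _ htranslate

/-- Theorem 4.1: the COCO estimates and the raw observations have the same centroid,
for a generic symmetric positive definite weighting matrix `M`. -/
theorem coco_centroid_preserved (d K : ℕ) (hd : 0 < d) (hK : 0 < K)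
    (L : ℝ) (hL : 0 < L)
    (x g θh : Fin K → EuclideanSpace ℝ (Fin d))
    (M : Matrix (Fin d) (Fin d) ℝ) (hMsymm : M.IsSymm) (hMpd : M.PosDef)
    (Θ : Set (Fin K → EuclideanSpace ℝ (Fin d)))
    (hΘ : Θ = {θ | ∀ m l : Fin K, m < l →
      (1 / L) * ‖θ m - θ l‖ ^ 2 ≤ ⟪θ m - θ l, x m - x l⟫})
    (hmem : θh ∈ Θ)
    (hmin : ∀ θ ∈ Θ,
      (∑ k, ⟪g k - θh k, Matrix.toEuclideanLin M (g k - θh k)⟫)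
        ≤ ∑ k, ⟪g k - θ k, Matrix.toEuclideanLin M (g k - θ k)⟫) :
    ∑ k, θh k = ∑ k, g k :=
  coco_centroid_preserved_general d K L x g θh M hMpd Θ hΘ hmem hmin
end

section
/- Let d, K be positive integers, L > 0, and let f : ℝ^d → ℝ be a convex differentiable function whose gradient is L-Lipschitz. Let x₁, …, x_K ∈ ℝ^d, let Θ be the COCO feasible set determined by L and x₁, …, x_K, and let ∇f = (∇f(x₁), …, ∇f(x_K)) ∈ (ℝ^d)^K. Let g = (g₁, …, g_K) ∈ (ℝ^d)^K be arbitrary, and let θ̂ ∈ Θ satisfy Σ_{k=1}^K ‖g_k − θ̂_k‖² ≤ Σ_{k=1}^K ‖g_k − θ_k‖² for all θ ∈ Θ. Then Σ_{k=1}^K ‖θ̂_k − ∇f(x_k)‖² ≤ Σ_{k=1}^K ‖g_k − ∇f(x_k)‖². -/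
/-!
By co-coercivity of the gradient of a convex `L`-smooth function (Baillon–Haddad), the tuple of
true gradients is feasible. The feasible set is convex, being an intersection of preimages of
the convex sets `{a | ‖a‖² / L ≤ ⟪a, c⟫}` under linear maps, so `θh` is the metric projection
of `g` onto a convex set, in the Euclidean space `PiLp 2`. The variational inequality
`⟪g - θh, θ - θh⟫ ≤ 0` then gives `‖θh - θ‖ ≤ ‖g - θ‖` for every feasible `θ`.
-/

open scoped RealInnerProductSpace

section Gradient

variable {E : Type*} [NormedAddCommGroup E] [InnerProductSpace ℝ E] [CompleteSpace E]
  {f : E → ℝ}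

theorem hasDerivAt_comp_add_smul (hf : Differentiable ℝ f) (x v : E) (t : ℝ) :
    HasDerivAt (fun s : ℝ => f (x + s • v)) ⟪gradient f (x + t • v), v⟫ t := by
  have hline : HasDerivAt (fun s : ℝ => x + s • v) v t := by
    simpa using ((hasDerivAt_id t).smul_const v).const_add x
  exact (hf _).hasGradientAt.hasFDerivAt.comp_hasDerivAt t hline

theorem ConvexOn.add_inner_gradient_le (hconv : ConvexOn ℝ Set.univ f)
    (hf : Differentiable ℝ f) (x y : E) : f x + ⟪gradient f x, y - x⟫ ≤ f y := by
  have hline : ConvexOn ℝ Set.univ fun t : ℝ => f (x + t • (y - x)) := by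
    simpa [Function.comp_def, AffineMap.lineMap_apply_module', add_comm] using
      hconv.comp_affineMap (AffineMap.lineMap x y)
  have := hline.le_slope_of_hasDerivAt (Set.mem_univ 0) (Set.mem_univ 1) one_pos
    (by simpa only [zero_smul, add_zero] using hasDerivAt_comp_add_smul hf x (y - x) 0)
  simp only [slope_def_field, zero_smul, add_zero, one_smul, add_sub_cancel, sub_zero,
    div_one] at this
  linarith

theorem le_add_inner_gradient_add_norm_sq (hf : Differentiable ℝ f) {L : ℝ}
    (hlip : ∀ a b : E, ‖gradient f a - gradient f b‖ ≤ L * ‖a - b‖) (x y : E) :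
    f y ≤ f x + ⟪gradient f x, y - x⟫ + L / 2 * ‖y - x‖ ^ 2 := by
  -- the gap between `f` and its quadratic upper model along the segment is antitone
  let gap : ℝ → ℝ := fun t =>
    f (x + t • (y - x)) - t * ⟪gradient f x, y - x⟫ - L / 2 * t ^ 2 * ‖y - x‖ ^ 2
  have hgap : ∀ t, HasDerivAt gap
      (⟪gradient f (x + t • (y - x)) - gradient f x, y - x⟫ - L * t * ‖y - x‖ ^ 2) t := by
    intro t
    refine (((hasDerivAt_comp_add_smul hf x (y - x) t).sub
      ((hasDerivAt_id t).mul_const _)).sub (((hasDerivAt_pow 2 t).const_mul (L / 2)).mul_const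
        (‖y - x‖ ^ 2))).congr_deriv ?_
    simp only [inner_sub_left, Nat.cast_ofNat]
    ring
  have hanti : AntitoneOn gap (Set.Ici 0) := by
    refine antitoneOn_of_hasDerivWithinAt_nonpos (convex_Ici 0)
      (fun t _ => (hgap t).continuousAt.continuousWithinAt)
      (fun t _ => (hgap t).hasDerivWithinAt) fun t ht => ?_
    rw [interior_Ici] at ht
    have hstep := hlip (x + t • (y - x)) x
    rw [add_sub_cancel_left, norm_smul, Real.norm_of_nonneg ht.le] at hstep
    nlinarith [real_inner_le_norm (gradient f (x + t • (y - x)) - gradient f x) (y - x),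
      norm_nonneg (y - x)]
  have := hanti Set.self_mem_Ici (Set.mem_Ici.2 zero_le_one) zero_le_one
  simp only [gap, zero_smul, add_zero, one_smul, add_sub_cancel, zero_mul, sub_zero, one_mul,
    one_pow, ne_eq, OfNat.ofNat_ne_zero, not_false_eq_true, zero_pow, mul_zero, mul_one] at this
  linarith

theorem ConvexOn.add_inner_gradient_add_norm_sq_le (hconv : ConvexOn ℝ Set.univ f)
    (hf : Differentiable ℝ f) {L : ℝ} (hL : 0 < L)
    (hlip : ∀ a b : E, ‖gradient f a - gradient f b‖ ≤ L * ‖a - b‖) (x y : E) :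
    f x + ⟪gradient f x, y - x⟫ + 1 / (2 * L) * ‖gradient f y - gradient f x‖ ^ 2 ≤ f y := by
  set w := gradient f y - gradient f x
  -- sandwich `f z` between the convexity bound at `x` and the descent bound at `y`
  set z := y - (1 / L) • w
  have hlower := hconv.add_inner_gradient_le hf x z
  have hupper := le_add_inner_gradient_add_norm_sq hf hlip y z
  have hw : 1 / L * ⟪gradient f y, w⟫ - 1 / L * ⟪gradient f x, w⟫ = 1 / L * ‖w‖ ^ 2 := by
    rw [← mul_sub, ← inner_sub_left, real_inner_self_eq_norm_sq]
  rw [show z - x = (y - x) - (1 / L) • w by simp only [z]; abel, inner_sub_right,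
    real_inner_smul_right] at hlower
  rw [show z - y = -((1 / L) • w) by simp only [z]; abel, inner_neg_right,
    real_inner_smul_right, norm_neg, norm_smul, Real.norm_of_nonneg (by positivity)] at hupper
  have : L / 2 * (1 / L * ‖w‖) ^ 2 = 1 / (2 * L) * ‖w‖ ^ 2 := by field_simp
  have : 1 / L * ‖w‖ ^ 2 = 2 * (1 / (2 * L) * ‖w‖ ^ 2) := by field_simp
  linarith

theorem ConvexOn.inv_mul_norm_sq_sub_gradient_le_inner (hconv : ConvexOn ℝ Set.univ f)
    (hf : Differentiable ℝ f) {L : ℝ} (hL : 0 < L)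
    (hlip : ∀ a b : E, ‖gradient f a - gradient f b‖ ≤ L * ‖a - b‖) (x y : E) :
    1 / L * ‖gradient f x - gradient f y‖ ^ 2 ≤ ⟪gradient f x - gradient f y, x - y⟫ := by
  have hxy := hconv.add_inner_gradient_add_norm_sq_le hf hL hlip x y
  have hyx := hconv.add_inner_gradient_add_norm_sq_le hf hL hlip y x
  rw [norm_sub_rev] at hxy
  have : ⟪gradient f x - gradient f y, x - y⟫ = -⟪gradient f x, y - x⟫ - ⟪gradient f y, x - y⟫ := by
    rw [inner_sub_left, ← neg_sub x y, inner_neg_right]; ring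
  have : 1 / L * ‖gradient f x - gradient f y‖ ^ 2
      = 2 * (1 / (2 * L) * ‖gradient f x - gradient f y‖ ^ 2) := by field_simp
  linarith

end Gradient

section Projection

variable {F : Type*} [NormedAddCommGroup F] [InnerProductSpace ℝ F]

theorem Convex.norm_sub_le_of_isMinOn {s : Set F} (hs : Convex ℝ s) {u v w : F} (hv : v ∈ s)
    (hmin : IsMinOn (fun z => ‖u - z‖) s v) (hw : w ∈ s) : ‖v - w‖ ≤ ‖u - w‖ := by
  have : Nonempty s := ⟨⟨v, hv⟩⟩
  have hbdd : BddBelow (Set.range fun z : s => ‖u - z‖) :=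
    ⟨0, by rintro _ ⟨z, rfl⟩; positivity⟩
  have hinf : ‖u - v‖ = ⨅ z : s, ‖u - z‖ :=
    le_antisymm (le_ciInf fun z => hmin z.2) (ciInf_le hbdd ⟨v, hv⟩)
  have hvar := (norm_eq_iInf_iff_real_inner_le_zero hs hv).1 hinf w hw
  have hsplit : ‖u - w‖ ^ 2 = ‖u - v‖ ^ 2 - 2 * ⟪u - v, w - v⟫ + ‖v - w‖ ^ 2 := by
    rw [← sub_add_sub_cancel u v w, norm_add_sq_real, ← neg_sub w v, inner_neg_right]; ring
  refine (pow_le_pow_iff_left₀ (norm_nonneg _) (norm_nonneg _) two_ne_zero).1 ?_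
  linarith [sq_nonneg ‖u - v‖]

theorem convex_setOf_mul_norm_sq_le_inner {c : ℝ} (hc : 0 ≤ c) (b : F) :
    Convex ℝ {a : F | c * ‖a‖ ^ 2 ≤ ⟪a, b⟫} := by
  have hlin : ConcaveOn ℝ Set.univ fun a : F => ⟪a, b⟫ := by
    simp_rw [real_inner_comm b]
    exact (innerₛₗ ℝ b).concaveOn convex_univ
  have hq : ConvexOn ℝ Set.univ fun a : F => c * ‖a‖ ^ 2 - ⟪a, b⟫ :=
    ((convexOn_univ_norm.pow (fun _ _ => norm_nonneg _) 2).smul hc).sub hlin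
  simpa [sub_nonpos] using hq.convex_le 0

end Projection

theorem sum_norm_sub_sq_eq_norm_toLp_sub_sq {ι E : Type*} [Fintype ι] [SeminormedAddCommGroup E]
    (a b : ι → E) :
    ∑ k, ‖a k - b k‖ ^ 2 = ‖WithLp.toLp 2 a - WithLp.toLp 2 b‖ ^ 2 := by
  rw [← WithLp.toLp_sub, PiLp.norm_sq_eq_of_L2]
  rfl

section Coco

variable {ι E : Type*} [NormedAddCommGroup E] [InnerProductSpace ℝ E]

def cocoSet [LT ι] (L : ℝ) (x : ι → E) : Set (ι → E) :=
  {θ | ∀ m l, m < l → (1 / L) * ‖θ m - θ l‖ ^ 2 ≤ ⟪θ m - θ l, x m - x l⟫}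

theorem convex_cocoSet [LT ι] {L : ℝ} (hL : 0 ≤ L) (x : ι → E) : Convex ℝ (cocoSet L x) := by
  simp only [cocoSet, Set.ofPred_forall]
  refine convex_iInter fun m => convex_iInter fun l => convex_iInter fun _ => ?_
  exact (convex_setOf_mul_norm_sq_le_inner (one_div_nonneg.2 hL) (x m - x l)).linear_preimage
    (LinearMap.proj (R := ℝ) (φ := fun _ => E) m - LinearMap.proj l)

theorem gradient_mem_cocoSet [LT ι] [CompleteSpace E] {f : E → ℝ}
    (hconv : ConvexOn ℝ Set.univ f) (hf : Differentiable ℝ f) {L : ℝ} (hL : 0 < L)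
    (hlip : ∀ a b : E, ‖gradient f a - gradient f b‖ ≤ L * ‖a - b‖) (x : ι → E) :
    (fun k => gradient f (x k)) ∈ cocoSet L x := fun m l _ =>
  hconv.inv_mul_norm_sq_sub_gradient_le_inner hf hL hlip (x m) (x l)

end Coco

theorem coco_total_error_le_oracle_general (d K : ℕ)
    (L : ℝ) (hL : 0 < L)
    (f : EuclideanSpace ℝ (Fin d) → ℝ)
    (hconv : ConvexOn ℝ Set.univ f)
    (hdiff : Differentiable ℝ f)
    (hlip : ∀ x y : EuclideanSpace ℝ (Fin d),
      ‖gradient f x - gradient f y‖ ≤ L * ‖x - y‖)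
    (x : Fin K → EuclideanSpace ℝ (Fin d))
    (Θ : Set (Fin K → EuclideanSpace ℝ (Fin d)))
    (hΘ : Θ = {θ | ∀ m l : Fin K, m < l →
      (1 / L) * ‖θ m - θ l‖ ^ 2 ≤ ⟪θ m - θ l, x m - x l⟫})
    (g θh : Fin K → EuclideanSpace ℝ (Fin d))
    (hmem : θh ∈ Θ)
    (hmin : ∀ θ ∈ Θ, ∑ k, ‖g k - θh k‖ ^ 2 ≤ ∑ k, ‖g k - θ k‖ ^ 2) :
    ∑ k, ‖θh k - gradient f (x k)‖ ^ 2 ≤ ∑ k, ‖g k - gradient f (x k)‖ ^ 2 := by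
  change Θ = cocoSet L x at hΘ
  subst hΘ
  have hconvex : Convex ℝ (WithLp.ofLp ⁻¹' cocoSet L x : Set (PiLp 2 fun _ : Fin K => _)) :=
    (convex_cocoSet hL.le x).linear_preimage (WithLp.linearEquiv 2 ℝ _).toLinearMap
  have hproj : IsMinOn (fun z => ‖WithLp.toLp 2 g - z‖) (WithLp.ofLp ⁻¹' cocoSet L x)
      (WithLp.toLp 2 θh) := fun θ hθ => by
    have := hmin θ.ofLp hθ
    rw [sum_norm_sub_sq_eq_norm_toLp_sub_sq, sum_norm_sub_sq_eq_norm_toLp_sub_sq] at this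
    exact (pow_le_pow_iff_left₀ (norm_nonneg _) (norm_nonneg _) two_ne_zero).1 this
  rw [sum_norm_sub_sq_eq_norm_toLp_sub_sq, sum_norm_sub_sq_eq_norm_toLp_sub_sq]
  gcongr
  exact hconvex.norm_sub_le_of_isMinOn hmem hproj (gradient_mem_cocoSet hconv hdiff hL hlip x)

/-- Theorem 4.2 (deterministic core): the COCO estimate, being the projection of the
raw observations onto the feasible set, is at least as close to the true gradients
as the raw observations are. -/
theorem coco_total_error_le_oracle (d K : ℕ) (hd : 0 < d) (hK : 0 < K)
    (L : ℝ) (hL : 0 < L)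
    (f : EuclideanSpace ℝ (Fin d) → ℝ)
    (hconv : ConvexOn ℝ Set.univ f)
    (hdiff : Differentiable ℝ f)
    (hlip : ∀ x y : EuclideanSpace ℝ (Fin d),
      ‖gradient f x - gradient f y‖ ≤ L * ‖x - y‖)
    (x : Fin K → EuclideanSpace ℝ (Fin d))
    (Θ : Set (Fin K → EuclideanSpace ℝ (Fin d)))
    (hΘ : Θ = {θ | ∀ m l : Fin K, m < l →
      (1 / L) * ‖θ m - θ l‖ ^ 2 ≤ ⟪θ m - θ l, x m - x l⟫})
    (g θh : Fin K → EuclideanSpace ℝ (Fin d))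
    (hmem : θh ∈ Θ)
    (hmin : ∀ θ ∈ Θ, ∑ k, ‖g k - θh k‖ ^ 2 ≤ ∑ k, ‖g k - θ k‖ ^ 2) :
    ∑ k, ‖θh k - gradient f (x k)‖ ^ 2 ≤ ∑ k, ‖g k - gradient f (x k)‖ ^ 2 :=
  coco_total_error_le_oracle_general d K L hL f hconv hdiff hlip x Θ hΘ g θh hmem hmin
end

section
/- Let d be a positive integer, L > 0, and x₁, x₂, g₁, g₂ ∈ ℝ^d with ‖g₁ − g₂‖² > L⟨g₁ − g₂, x₁ − x₂⟩. Set u = g₁ − g₂ − (L/2)(x₁ − x₂) (which is nonzero under the hypothesis), θ̂₁ = (g₁ + g₂ + (L/2)(x₁ − x₂))/2 + (L‖x₁ − x₂‖/4)·(u/‖u‖) and θ̂₂ = (g₁ + g₂ − (L/2)(x₁ − x₂))/2 − (L‖x₁ − x₂‖/4)·(u/‖u‖). Then (i) θ̂₁ + θ̂₂ = g₁ + g₂, and (ii) the co-coercivity constraint holds with equality: ‖θ̂₁ − θ̂₂‖² = L⟨θ̂₁ − θ̂₂, x₁ − x₂⟩. -/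
open scoped RealInnerProductSpace

/-! Since `θ̂₁ - θ̂₂ = (L/2) • (v + ‖v‖ • w)` with `v = x₁ - x₂` and `w = u / ‖u‖` a unit vector, the
constraint reduces to `‖v + ‖v‖ • w‖² = 2 ⟪v + ‖v‖ • w, v⟫`, which holds for every unit `w`: both
sides equal `2 ‖v‖² + 2 ‖v‖ ⟪v, w⟫`. Violated co-coercivity forces `u ≠ 0`,
because `‖u‖² = ‖g₁ - g₂‖² - L ⟪g₁ - g₂, v⟫ + (L/2)² ‖v‖²`. -/

section

variable {E : Type*} [NormedAddCommGroup E] [InnerProductSpace ℝ E]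

theorem sub_smul_ne_zero_of_mul_inner_lt_norm_sq {a v : E} {L : ℝ}
    (h : L * ⟪a, v⟫ < ‖a‖ ^ 2) : a - (L / 2) • v ≠ 0 := by
  have hpos : 0 < ‖a - (L / 2) • v‖ ^ 2 := by
    rw [norm_sub_sq_real, real_inner_smul_right, norm_smul, Real.norm_eq_abs, mul_pow, sq_abs]
    nlinarith [sq_nonneg (L / 2), sq_nonneg ‖v‖]
  intro h0
  rw [h0, norm_zero] at hpos
  norm_num at hpos

theorem norm_add_norm_smul_sq_eq_two_mul_inner (v : E) {w : E} (hw : ‖w‖ = 1) :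
    ‖v + ‖v‖ • w‖ ^ 2 = 2 * ⟪v + ‖v‖ • w, v⟫ := by
  rw [norm_add_sq_real, norm_smul, norm_norm, hw, inner_add_left, real_inner_smul_right,
    real_inner_smul_left, real_inner_self_eq_norm_sq, real_inner_comm]
  ring

theorem norm_smul_add_norm_smul_sq_eq_two_mul_mul_inner (c : ℝ) (v : E) {w : E} (hw : ‖w‖ = 1) :
    ‖c • (v + ‖v‖ • w)‖ ^ 2 = 2 * c * ⟪c • (v + ‖v‖ • w), v⟫ := by
  rw [norm_smul, mul_pow, Real.norm_eq_abs, sq_abs, norm_add_norm_smul_sq_eq_two_mul_inner v hw,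
    real_inner_smul_left]
  ring

end

theorem coco2_active_case_facts_general (d : ℕ) (L : ℝ)
    (x₁ x₂ g₁ g₂ u θh₁ θh₂ : EuclideanSpace ℝ (Fin d))
    (h : ‖g₁ - g₂‖ ^ 2 > L * ⟪g₁ - g₂, x₁ - x₂⟫)
    (hu : u = g₁ - g₂ - (L / 2) • (x₁ - x₂))
    (h1 : θh₁ = (2 : ℝ)⁻¹ • (g₁ + g₂ + (L / 2) • (x₁ - x₂))
        + (L * ‖x₁ - x₂‖ / 4) • (‖u‖⁻¹ • u))
    (h2 : θh₂ = (2 : ℝ)⁻¹ • (g₁ + g₂ - (L / 2) • (x₁ - x₂))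
        - (L * ‖x₁ - x₂‖ / 4) • (‖u‖⁻¹ • u)) :
    θh₁ + θh₂ = g₁ + g₂ ∧
    ‖θh₁ - θh₂‖ ^ 2 = L * ⟪θh₁ - θh₂, x₁ - x₂⟫ := by
  have hu0 : u ≠ 0 := hu ▸ sub_smul_ne_zero_of_mul_inner_lt_norm_sq h
  have hw : ‖‖u‖⁻¹ • u‖ = 1 := norm_smul_inv_norm hu0
  have hdiff : θh₁ - θh₂ = (L / 2) • (x₁ - x₂ + ‖x₁ - x₂‖ • (‖u‖⁻¹ • u)) := by
    rw [h1, h2]; module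
  refine ⟨by rw [h1, h2]; module, ?_⟩
  rw [hdiff, norm_smul_add_norm_smul_sq_eq_two_mul_mul_inner _ _ hw]
  ring

/-- Verification facts for the closed-form COCO₂ solution in the active case:
the sum of the estimates equals the sum of the observations, and the
co-coercivity constraint holds with equality. -/
theorem coco2_active_case_facts (d : ℕ) (hd : 0 < d) (L : ℝ) (hL : 0 < L)
    (x₁ x₂ g₁ g₂ u θh₁ θh₂ : EuclideanSpace ℝ (Fin d))
    (h : ‖g₁ - g₂‖ ^ 2 > L * ⟪g₁ - g₂, x₁ - x₂⟫)
    (hu : u = g₁ - g₂ - (L / 2) • (x₁ - x₂))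
    (h1 : θh₁ = (2 : ℝ)⁻¹ • (g₁ + g₂ + (L / 2) • (x₁ - x₂))
        + (L * ‖x₁ - x₂‖ / 4) • (‖u‖⁻¹ • u))
    (h2 : θh₂ = (2 : ℝ)⁻¹ • (g₁ + g₂ - (L / 2) • (x₁ - x₂))
        - (L * ‖x₁ - x₂‖ / 4) • (‖u‖⁻¹ • u)) :
    θh₁ + θh₂ = g₁ + g₂ ∧
    ‖θh₁ - θh₂‖ ^ 2 = L * ⟪θh₁ - θh₂, x₁ - x₂⟫ :=
  coco2_active_case_facts_general d L x₁ x₂ g₁ g₂ u θh₁ θh₂ h hu h1 h2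
end

section
/- Let H be a finite-dimensional real inner product space, let s, c ∈ H, r ≥ 0 and μ > 0, and define q*(u) = r‖u‖ − ⟨u, c⟩. Let v be the metric projection of c + s/μ onto the closed ball {x ∈ H : ‖x‖ ≤ r}, i.e., v = c + s/μ if ‖c + s/μ‖ ≤ r and v = r(c + s/μ)/‖c + s/μ‖ otherwise. Then the unique minimizer of u ↦ (1/2)‖u − s‖² + μ q*(u) over H is u* = s − μ(v − c); that is, prox_{μq*}(s) = s − μ(v_proj − c). -/
/-!
Write `w = c + μ⁻¹ • s`, `v` for its projection onto the ball of radius `r` and `u₀ = s - μ • (v - c)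
= μ • (w - v)`. Then `‖v‖ ≤ r` and `⟪u₀, v⟫ = r * ‖u₀‖`, i.e. `v` is a subgradient of `r * ‖·‖` at `u₀`;
with `u₀ - s = -μ • (v - c)` this is exactly the optimality condition of the `1`-strongly convex
objective, and expanding the square exhibits the gap to any other `u` as
`‖u - u₀‖² / 2 + μ (r‖u‖ - ⟪u, v⟫) > 0`.
-/

open scoped RealInnerProductSpace

section

variable {H : Type*} [NormedAddCommGroup H] [InnerProductSpace ℝ H]

noncomputable def closedBallProj (r : ℝ) (w : H) : H :=
  if ‖w‖ ≤ r then w else (r / ‖w‖) • w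

section closedBallProj

variable {r : ℝ} (w : H)

theorem norm_closedBallProj_le (hr : 0 ≤ r) : ‖closedBallProj r w‖ ≤ r := by
  unfold closedBallProj
  split_ifs with h
  · exact h
  · have hw : 0 < ‖w‖ := hr.trans_lt (not_le.mp h)
    rw [norm_smul, Real.norm_of_nonneg (div_nonneg hr hw.le), div_mul_cancel₀ _ hw.ne']

theorem inner_sub_closedBallProj (hr : 0 ≤ r) :
    ⟪w - closedBallProj r w, closedBallProj r w⟫ = r * ‖w - closedBallProj r w‖ := by
  unfold closedBallProj
  split_ifs with h
  · simp
  · have hw : 0 < ‖w‖ := hr.trans_lt (not_le.mp h)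
    have hcoef : 0 ≤ 1 - r / ‖w‖ := sub_nonneg.mpr ((div_le_one hw).mpr (not_le.mp h).le)
    have hsub : w - (r / ‖w‖) • w = (1 - r / ‖w‖) • w := by module
    rw [hsub, real_inner_smul_left, real_inner_smul_right, real_inner_self_eq_norm_sq, norm_smul,
      Real.norm_of_nonneg hcoef]
    field_simp

end closedBallProj

section proxObjective

variable {s c v u₀ : H} {r μ : ℝ}

theorem prox_objective_eq (h : s - u₀ = μ • (v - c)) (u : H) :
    (1 / 2) * ‖u - s‖ ^ 2 + μ * (r * ‖u‖ - ⟪u, c⟫)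
      = (1 / 2) * ‖u₀ - s‖ ^ 2 + μ * (r * ‖u₀‖ - ⟪u₀, c⟫) + (1 / 2) * ‖u - u₀‖ ^ 2
        + μ * (r * ‖u‖ - ⟪u, v⟫) - μ * (r * ‖u₀‖ - ⟪u₀, v⟫) := by
  have hus : u - s = (u - u₀) - (s - u₀) := by abel
  rw [hus, ← norm_neg (u₀ - s), neg_sub, h, norm_sub_sq_real, real_inner_smul_right,
    inner_sub_right, inner_sub_left, inner_sub_left]
  ring

theorem prox_objective_lt_of_subgradient (hμ : 0 ≤ μ) (h : s - u₀ = μ • (v - c))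
    (hv : ‖v‖ ≤ r) (hsub : ⟪u₀, v⟫ = r * ‖u₀‖) {u : H} (hu : u ≠ u₀) :
    (1 / 2) * ‖u₀ - s‖ ^ 2 + μ * (r * ‖u₀‖ - ⟪u₀, c⟫)
      < (1 / 2) * ‖u - s‖ ^ 2 + μ * (r * ‖u‖ - ⟪u, c⟫) := by
  have hgap : 0 < ‖u - u₀‖ ^ 2 := by positivity [sub_ne_zero.mpr hu]
  have hcs : ⟪u, v⟫ ≤ r * ‖u‖ :=
    (real_inner_le_norm u v).trans (by rw [mul_comm]; gcongr)
  rw [prox_objective_eq h u, hsub, sub_self, mul_zero, sub_zero]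
  nlinarith [mul_nonneg hμ (sub_nonneg.mpr hcs)]

end proxObjective

end

theorem prox_of_dual_ball_term_general (H : Type*) [NormedAddCommGroup H]
    [InnerProductSpace ℝ H]
    (s c : H) (r μ : ℝ) (hr : 0 ≤ r) (hμ : 0 < μ)
    (q : H → ℝ) (hq : q = fun u => r * ‖u‖ - ⟪u, c⟫)
    (v : H)
    (hv : v = if ‖c + μ⁻¹ • s‖ ≤ r then c + μ⁻¹ • s
      else (r / ‖c + μ⁻¹ • s‖) • (c + μ⁻¹ • s)) :
    ∀ u : H, u ≠ s - μ • (v - c) →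
      (1 / 2) * ‖(s - μ • (v - c)) - s‖ ^ 2 + μ * q (s - μ • (v - c))
        < (1 / 2) * ‖u - s‖ ^ 2 + μ * q u := by
  intro u hu
  set w := c + μ⁻¹ • s
  replace hv : v = closedBallProj r w := hv
  have hu₀ : s - μ • (v - c) = μ • (w - v) := by
    simp only [w, smul_sub, smul_add, smul_inv_smul₀ hμ.ne']
    abel
  have hsub : ⟪s - μ • (v - c), v⟫ = r * ‖s - μ • (v - c)‖ := by
    rw [hu₀, real_inner_smul_left, norm_smul, Real.norm_of_nonneg hμ.le, hv,
      inner_sub_closedBallProj w hr]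
    ring
  subst hq
  exact prox_objective_lt_of_subgradient hμ.le (sub_sub_cancel s _)
    (hv ▸ norm_closedBallProj_le w hr) hsub hu

/-- Closed-form proximity operator for `q*(u) = r‖u‖ - ⟨u, c⟩`:
`prox_{μ q*}(s) = s - μ (v_proj - c)`, where `v_proj` is the metric projection of
`c + s/μ` onto the closed ball of radius `r` centered at the origin. -/
theorem prox_of_dual_ball_term (H : Type*) [NormedAddCommGroup H]
    [InnerProductSpace ℝ H] [FiniteDimensional ℝ H]
    (s c : H) (r μ : ℝ) (hr : 0 ≤ r) (hμ : 0 < μ)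
    (q : H → ℝ) (hq : q = fun u => r * ‖u‖ - ⟪u, c⟫)
    (v : H)
    (hv : v = if ‖c + μ⁻¹ • s‖ ≤ r then c + μ⁻¹ • s
      else (r / ‖c + μ⁻¹ • s‖) • (c + μ⁻¹ • s)) :
    ∀ u : H, u ≠ s - μ • (v - c) →
      (1 / 2) * ‖(s - μ • (v - c)) - s‖ ^ 2 + μ * q (s - μ • (v - c))
        < (1 / 2) * ‖u - s‖ ^ 2 + μ * q u :=
  prox_of_dual_ball_term_general H s c r μ hr hμ q hq v hv
end
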